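/- Let G be a prosoluble profinite group that contains a soluble subgroup of finite index. Then G is soluble. -/

import Mathlib

/-!
The normal core `K` of `H` is closed of finite index, hence open, so `G ⧸ K` is soluble and some
term of the closed derived series of `G` lies in `K`. From there on the closed derived series of
`G` is contained in that of `K`, which ends in `1` because `K ≤ H`.
-/

/-- The closed derived series of a topological group: at each step take the
topological closure of the commutator subgroup of the previous term. -/
def closedDerivedSeries (G : Type*) [Group G] [TopologicalSpace G] [IsTopologicalGroup G] :
    ℕ → Subgroup G
  | 0 => ⊤
  | n + 1 => (⁅closedDerivedSeries G n, closedDerivedSeries G n⁆).topologicalClosure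

/-- A topological group is soluble of derived length at most `n` if the `n`-th term of the
closed derived series is trivial. -/
def SolubleOfLength (G : Type*) [Group G] [TopologicalSpace G] [IsTopologicalGroup G]
    (n : ℕ) : Prop :=
  closedDerivedSeries G n = ⊥

/-- Soluble: soluble of derived length at most `n` for some `n`. -/
def Soluble (G : Type*) [Group G] [TopologicalSpace G] [IsTopologicalGroup G] : Prop :=
  ∃ n, SolubleOfLength G n

/-- `CA_d`: the centraliser of every non-trivial element is soluble of derived length
at most `d`. -/
def IsCA (G : Type*) [Group G] [TopologicalSpace G] [IsTopologicalGroup G] (d : ℕ) : Prop :=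
  ∀ x : G, x ≠ 1 → SolubleOfLength ↥(Subgroup.centralizer {x}) d

/-- Pro-`p`: every open normal subgroup has index a power of `p`. -/
def IsProP (G : Type*) [Group G] [TopologicalSpace G] (p : ℕ) : Prop :=
  ∀ N : Subgroup G, N.Normal → IsOpen (N : Set G) → ∃ k : ℕ, N.index = p ^ k

/-- Virtually pro-`p` (for some prime `p`): some open subgroup is pro-`p`. -/
def VirtuallyProP (G : Type*) [Group G] [TopologicalSpace G] : Prop :=
  ∃ p : ℕ, p.Prime ∧ ∃ H : Subgroup G, IsOpen (H : Set G) ∧ IsProP ↥H p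

/-- Prosoluble: the quotient by every open normal subgroup is soluble. -/
def Prosoluble (G : Type*) [Group G] [TopologicalSpace G] : Prop :=
  ∀ (N : Subgroup G) [N.Normal], IsOpen (N : Set G) → IsSolvable (G ⧸ N)

/-- Pronilpotent: the quotient by every open normal subgroup is nilpotent. -/
def Pronilpotent (G : Type*) [Group G] [TopologicalSpace G] : Prop :=
  ∀ (N : Subgroup G) [N.Normal], IsOpen (N : Set G) → Group.IsNilpotent (G ⧸ N)

/-- `primesOf G` = π(G): the set of primes dividing the order of some finite continuous
quotient of `G`, i.e. dividing the index of some open normal subgroup. -/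
def primesOf (G : Type*) [Group G] [TopologicalSpace G] : Set ℕ :=
  {p | p.Prime ∧ ∃ N : Subgroup G, N.Normal ∧ IsOpen (N : Set G) ∧ p ∣ N.index}

/-- The Fitting height is at most `n`: there is a chain `1 = G_0 ≤ ⋯ ≤ G_n = G` of closed
normal subgroups all of whose successive quotients are pronilpotent. -/
def FittingHeightLe (G : Type*) [Group G] [TopologicalSpace G] (n : ℕ) : Prop :=
  ∃ c : ℕ → Subgroup G,
    Monotone c ∧ c 0 = ⊥ ∧ c n = ⊤ ∧
    (∀ i, (c i).Normal ∧ IsClosed ((c i : Set G))) ∧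
    ∀ i, i < n → ∀ [((c i).subgroupOf (c (i + 1))).Normal],
      Pronilpotent (↥(c (i + 1)) ⧸ (c i).subgroupOf (c (i + 1)))

section ClosedDerivedSeries

variable {G : Type*} [Group G] [TopologicalSpace G] [IsTopologicalGroup G]

lemma closedDerivedSeries_succ (n : ℕ) :
    closedDerivedSeries G (n + 1) =
      (⁅closedDerivedSeries G n, closedDerivedSeries G n⁆).topologicalClosure :=
  rfl

lemma Subgroup.map_topologicalClosure_le {Q : Type*} [Group Q] [TopologicalSpace Q]
    [IsTopologicalGroup Q] (f : G →* Q) (hf : Continuous f) (S : Subgroup G) :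
    S.topologicalClosure.map f ≤ (S.map f).topologicalClosure := by
  rw [← SetLike.coe_subset_coe, Subgroup.coe_map, Subgroup.topologicalClosure_coe,
    Subgroup.topologicalClosure_coe, Subgroup.coe_map]
  exact image_closure_subset_closure_image hf

lemma Subgroup.topologicalClosure_map_subtype {K : Subgroup G} (hK : IsClosed (K : Set G))
    (S : Subgroup K) :
    (S.map K.subtype).topologicalClosure = S.topologicalClosure.map K.subtype := by
  refine SetLike.coe_injective ?_
  rw [Subgroup.topologicalClosure_coe, Subgroup.coe_map, Subgroup.coe_map,
    Subgroup.topologicalClosure_coe, Subgroup.coe_subtype]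
  exact hK.isClosedEmbedding_subtypeVal.closure_image_eq (S : Set K)

lemma map_closedDerivedSeries_le {Q : Type*} [Group Q] [TopologicalSpace Q]
    [IsTopologicalGroup Q] (f : G →* Q) (hf : Continuous f) (n : ℕ) :
    (closedDerivedSeries G n).map f ≤ closedDerivedSeries Q n := by
  induction n with
  | zero => exact le_top
  | succ n ih =>
    rw [closedDerivedSeries_succ, closedDerivedSeries_succ]
    refine (Subgroup.map_topologicalClosure_le f hf _).trans ?_
    rw [Subgroup.map_commutator]
    exact Subgroup.topologicalClosure_mono (Subgroup.commutator_mono ih ih)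

lemma SolubleOfLength.of_injective {Q : Type*} [Group Q] [TopologicalSpace Q]
    [IsTopologicalGroup Q] {f : G →* Q} (hf : Continuous f) (hinj : Function.Injective f)
    {n : ℕ} (hQ : SolubleOfLength Q n) : SolubleOfLength G n := by
  have hmap := map_closedDerivedSeries_le f hf n
  rw [hQ, le_bot_iff, Subgroup.map_eq_bot_iff_of_injective _ hinj] at hmap
  exact hmap

lemma closedDerivedSeries_le_comap_derivedSeries {Q : Type*} [Group Q] (f : G →* Q)
    (hf : IsOpen (f.ker : Set G)) (n : ℕ) :
    closedDerivedSeries G n ≤ (derivedSeries Q n).comap f := by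
  induction n with
  | zero => exact le_top
  | succ n ih =>
    have hclosed : IsClosed ((derivedSeries Q (n + 1)).comap f : Set G) :=
      Subgroup.isClosed_of_isOpen _ (Subgroup.isOpen_mono (MonoidHom.ker_le_comap f _) hf)
    refine Subgroup.topologicalClosure_minimal _ ?_ hclosed
    rw [← Subgroup.map_le_iff_le_comap, Subgroup.map_commutator, derivedSeries_succ]
    have ih' := Subgroup.map_le_iff_le_comap.mpr ih
    exact Subgroup.commutator_mono ih' ih'

lemma exists_closedDerivedSeries_le_of_isSolvable (N : Subgroup G) [N.Normal]
    (hN : IsOpen (N : Set G)) (hQ : Group.IsSolvable (G ⧸ N)) :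
    ∃ m, closedDerivedSeries G m ≤ N := by
  obtain ⟨m, hm⟩ := hQ.solvable
  refine ⟨m, ?_⟩
  have h := closedDerivedSeries_le_comap_derivedSeries (QuotientGroup.mk' N)
    (by rwa [QuotientGroup.ker_mk']) m
  rwa [hm, MonoidHom.comap_bot, QuotientGroup.ker_mk'] at h

lemma closedDerivedSeries_add_le_map {K : Subgroup G} (hK : IsClosed (K : Set G)) {m : ℕ}
    (hm : closedDerivedSeries G m ≤ K) (i : ℕ) :
    closedDerivedSeries G (m + i) ≤ (closedDerivedSeries K i).map K.subtype := by
  induction i with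
  | zero => rwa [Nat.add_zero, closedDerivedSeries, ← MonoidHom.range_eq_map,
      Subgroup.range_subtype]
  | succ i ih =>
    rw [← Nat.add_assoc, closedDerivedSeries_succ, closedDerivedSeries_succ,
      ← Subgroup.topologicalClosure_map_subtype hK, Subgroup.map_commutator]
    exact Subgroup.topologicalClosure_mono (Subgroup.commutator_mono ih ih)

lemma SolubleOfLength.of_closedDerivedSeries_le {K : Subgroup G} (hK : IsClosed (K : Set G))
    {m d : ℕ} (hm : closedDerivedSeries G m ≤ K) (hKd : SolubleOfLength K d) :
    SolubleOfLength G (m + d) := by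
  have h := closedDerivedSeries_add_le_map hK hm d
  rwa [hKd, Subgroup.map_bot, le_bot_iff] at h

end ClosedDerivedSeries

theorem prosoluble_virtually_soluble_is_soluble_general
    (G : Type*) [Group G] [TopologicalSpace G] [IsTopologicalGroup G]
    (hpro : Prosoluble G)
    (H : Subgroup G) (hHc : IsClosed (H : Set G)) (hfin : H.index ≠ 0)
    (hHsol : Soluble ↥H) :
    Soluble G := by
  have : H.FiniteIndex := ⟨hfin⟩
  have hKc : IsClosed (H.normalCore : Set G) := H.normalCore_isClosed hHc
  have hKo : IsOpen (H.normalCore : Set G) :=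
    H.normalCore.isOpen_of_isClosed_of_finiteIndex hKc
  obtain ⟨m, hm⟩ := exists_closedDerivedSeries_le_of_isSolvable H.normalCore hKo (hpro _ hKo)
  obtain ⟨d, hd⟩ := hHsol
  have hKd : SolubleOfLength H.normalCore d :=
    hd.of_injective (continuous_inclusion H.normalCore_le)
      (Subgroup.inclusion_injective H.normalCore_le)
  exact ⟨m + d, SolubleOfLength.of_closedDerivedSeries_le hKc hm hKd⟩

/-- A prosoluble profinite group containing a soluble (closed) subgroup of finite index is
soluble. -/
theorem prosoluble_virtually_soluble_is_soluble
    (G : Type*) [Group G] [TopologicalSpace G] [IsTopologicalGroup G]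
    [CompactSpace G] [T2Space G] [TotallyDisconnectedSpace G]
    (hpro : Prosoluble G)
    (H : Subgroup G) (hHc : IsClosed (H : Set G)) (hfin : H.index ≠ 0)
    (hHsol : Soluble ↥H) :
    Soluble G :=
  prosoluble_virtually_soluble_is_soluble_general G hpro H hHc hfin hHsol
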